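/- For all n > 0 and all k with 0 < k < n, the first and the last bit-string of the list C(n,k) differ in exactly two positions, namely position k and position n: the first string is 1^k 0^{n-k} and the last string is 1^{k-1} 0^{n-k} 1. Hence the listing C(n,k) is circular: the last element is carried to the first element by a single transposition of a one and a zero. -/
import Mathlib


/-- The recursively defined list `C(n,k)` of bit-strings of length `n`:
`C(n,0) = [0^n]`, `C(n,n) = [1^n]`, and for `0 < k < n`, `C(n,k)` is the list
`C(n-1,k)` with the bit `0` appended at the right end of each string, followed by the
reversal of the list `C(n-1,k-1)` with the bit `1` appended at the right end of each
string.  Bits are booleans: `true = 1`, `false = 0`. -/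
def C : ℕ → ℕ → List (List Bool)
  | n, 0 => [List.replicate n false]
  | 0, _ + 1 => []
  | n + 1, k + 1 =>
      if n = k then [List.replicate (n + 1) true]
      else
        ((C n (k + 1)).map fun w => w ++ [false]) ++
          ((C n k).reverse.map fun w => w ++ [true])

lemma C_ne_nil : ∀ n k, k ≤ n → C n k ≠ []
  | n, 0, _ => by simp [C]
  | n+1, k+1, h => by
    by_cases hnk : n = k
    · simp [C, hnk]
    · have hk : k + 1 ≤ n := by omega
      simp only [C, if_neg hnk]
      have := C_ne_nil n (k+1) hk
      simp_all

lemma C_head : ∀ n k, 0 < k → k ≤ n →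
    (C n k).head? = some (List.replicate k true ++ List.replicate (n - k) false)
  | 0, k, h0, h => by omega
  | n+1, 0, h0, h => by omega
  | n+1, k+1, _, h => by
    by_cases hnk : n = k
    · subst hnk; simp [C]
    · have hk : k + 1 ≤ n := by omega
      have ih := C_head n (k+1) (by omega) hk
      simp only [C, if_neg hnk]
      rw [List.head?_append_of_ne_nil]
      · rw [List.head?_map, ih]
        simp only [Option.map_some]
        congr 1
        rw [List.append_assoc]
        congr 1
        rw [← List.replicate_succ']
        congr 1
        omega
      · simp [C_ne_nil n (k+1) hk]

lemma C_last : ∀ n k, 0 < k → k ≤ n →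
    (C n k).getLast? =
      some (List.replicate (k - 1) true ++ List.replicate (n - k) false ++ [true])
  | 0, k, h0, h => by omega
  | n+1, 0, h0, h => by omega
  | n+1, k+1, _, h => by
    by_cases hnk : n = k
    · subst hnk
      simp [C, List.replicate_succ' (n := n)]
    · have hk : k + 1 ≤ n := by omega
      simp only [C, if_neg hnk]
      rw [List.getLast?_append_of_ne_nil]
      · rw [List.getLast?_map, List.getLast?_reverse]
        rcases Nat.eq_zero_or_pos k with rfl | hkpos
        · simp [C]
        · rw [C_head n k hkpos (by omega)]
          simp only [Option.map_some]
          have e1 : k + 1 - 1 = k := by omega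
          have e2 : n + 1 - (k + 1) = n - k := by omega
          rw [e1, e2]
      · have := C_ne_nil n k (by omega)
        simp_all

lemma get_rep2 (k m r : ℕ) (a b : Bool) :
    (List.replicate k a ++ List.replicate m b)[r]? =
      if r < k then some a else if r < k + m then some b else none := by
  rcases lt_or_ge r k with h | h
  · rw [List.getElem?_append, List.length_replicate, if_pos h, List.getElem?_replicate,
      if_pos h, if_pos h]
  · rw [List.getElem?_append_right (by simpa using h)]
    simp only [List.length_replicate, List.getElem?_replicate]
    split_ifs <;> first | rfl | omega

lemma get_rep3 (k m r : ℕ) :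
    (List.replicate k true ++ List.replicate m false ++ [true])[r]? =
      if r < k then some true else if r < k + m then some false
      else if r = k + m then some true else none := by
  rw [List.getElem?_append, List.length_append, List.length_replicate,
    List.length_replicate, get_rep2]
  rcases lt_or_ge r (k + m) with h | h
  · rw [if_pos h]
    split_ifs <;> first | rfl | omega
  · rw [if_neg (by omega)]
    rcases eq_or_lt_of_le h with rfl | h2
    · simp
    · have : r - (k + m) ≥ 1 := by omega
      rw [List.getElem?_eq_none (by simpa using this)]
      split_ifs <;> first | rfl | omega


/-- For all `n > 0` and `0 < k < n`, the first bit-string of `C(n,k)` is `1^k 0^{n-k}`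
and the last is `1^{k-1} 0^{n-k} 1`; these differ in exactly two positions, namely
position `k` and position `n` (indices `k-1` and `n-1` here), so the listing is
circular: the last element is carried to the first by a single transposition of a one
and a zero. -/
theorem stmt6 (n k : ℕ) (h0 : 0 < k) (h1 : k < n) :
    (C n k).head? = some (List.replicate k true ++ List.replicate (n - k) false) ∧
    (C n k).getLast? =
      some (List.replicate (k - 1) true ++ List.replicate (n - k) false ++ [true]) ∧
    (∀ w w', (C n k).head? = some w → (C n k).getLast? = some w' →
      w[k - 1]? = some true ∧ w'[k - 1]? = some false ∧
      w[n - 1]? = some false ∧ w'[n - 1]? = some true ∧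
      ∀ r, r ≠ k - 1 → r ≠ n - 1 → w[r]? = w'[r]?) := by
  have hh := C_head n k h0 (le_of_lt h1)
  have hl := C_last n k h0 (le_of_lt h1)
  refine ⟨hh, hl, fun w w' hw hw' => ?_⟩
  rw [hh] at hw; rw [hl] at hw'
  injection hw with hw; subst hw
  injection hw' with hw'; subst hw'
  refine ⟨?_, ?_, ?_, ?_, fun r hr1 hr2 => ?_⟩
  · rw [get_rep2, if_pos (by omega)]
  · rw [get_rep3, if_neg (by omega), if_pos (by omega)]
  · rw [get_rep2, if_neg (by omega), if_pos (by omega)]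
  · rw [get_rep3, if_neg (by omega), if_neg (by omega), if_pos (by omega)]
  · rw [get_rep2, get_rep3]
    split_ifs <;> first | rfl | omega
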